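/- Let n ≥ 1 and let M_n be the Mirakjan–Favard–Szász operator, M_n f(x) := e^{−nx} ∑_{k=0}^∞ ((nx)^k / k!)·f(k/n) for x ≥ 0, and set σ_n(x) := e^{−2nx} ∑_{k=0}^∞ (nx)^{2k}/(k!)². Then for all bounded continuous f, g : [0,∞) → ℝ and all x ≥ 0, |M_n(f·g)(x) − M_n f(x)·M_n g(x)| ≤ (1/2)·(1 − σ_n(x))·osc_{M_n}(f)·osc_{M_n}(g), where osc_{M_n}(f) := sup{|f(k/n) − f(l/n)| : 0 ≤ k < l < ∞} and similarly for g. -/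

import Mathlib

/-!
With the Poisson weights `p k = e^(-nx) (nx)^k / k!`, which are nonnegative and sum to `1`,
the covariance `M_n(fg) - M_n f · M_n g` equals half the double sum
`∑_{k,l} p k p l (f(k/n) - f(l/n)) (g(k/n) - g(l/n))`. The diagonal terms vanish and every
other term is at most `p k p l · osc f · osc g` in absolute value, while the off-diagonal mass
is `(∑ p k)² - ∑ (p k)² = 1 - σ_n(x)`.
-/

/-- The `n`-th Mirakjan–Favard–Szász operator
`M_n f(x) = e^(-nx) ∑_{k=0}^∞ ((nx)^k / k!) f(k/n)`. -/
noncomputable def szaszOp (n : ℕ) (f : ℝ → ℝ) (x : ℝ) : ℝ :=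
  Real.exp (-(n * x)) * ∑' k : ℕ, ((n * x) ^ k / (k.factorial : ℝ)) * f (k / n)

/-- `σ_n(x) = e^(-2nx) ∑_{k=0}^∞ (nx)^(2k) / (k!)²`, the sum of squares of the fundamental
functions of the Szász operator. -/
noncomputable def szaszSigma (n : ℕ) (x : ℝ) : ℝ :=
  Real.exp (-(2 * n * x)) * ∑' k : ℕ, (n * x) ^ (2 * k) / (k.factorial : ℝ) ^ 2

open Real

theorem hasSum_prod_mul_of_summable_norm {ι κ R : Type*} [NormedRing R] [CompleteSpace R]
    {u : ι → R} {v : κ → R} (hu : Summable fun i => ‖u i‖) (hv : Summable fun j => ‖v j‖) :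
    HasSum (fun z : ι × κ => u z.1 * v z.2) ((∑' i, u i) * ∑' j, v j) :=
  hu.of_norm.hasSum.mul hv.of_norm.hasSum (summable_mul_of_summable_norm hu hv)

section ProbabilityWeights

variable {ι : Type*} {p : ι → ℝ}

theorem summable_norm_mul_of_abs_le (hp0 : ∀ i, 0 ≤ p i) (hp : Summable p) {c : ι → ℝ}
    {C : ℝ} (hc : ∀ i, |c i| ≤ C) : Summable fun i => ‖p i * c i‖ :=
  (hp.mul_right C).of_nonneg_of_le (fun _ => norm_nonneg _) fun i => by
    rw [Real.norm_eq_abs, abs_mul, abs_of_nonneg (hp0 i)]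
    exact mul_le_mul_of_nonneg_left (hc i) (hp0 i)

theorem hasSum_pairwise_mul_sub_mul_sub (hp0 : ∀ i, 0 ≤ p i) (hp : HasSum p 1)
    {a b : ι → ℝ} {Ca Cb : ℝ} (ha : ∀ i, |a i| ≤ Ca) (hb : ∀ i, |b i| ≤ Cb) :
    HasSum (fun z : ι × ι => p z.1 * p z.2 * ((a z.1 - a z.2) * (b z.1 - b z.2)))
      (2 * (∑' i, p i * (a i * b i) - (∑' i, p i * a i) * ∑' i, p i * b i)) := by
  have hab : ∀ i, |a i * b i| ≤ Ca * Cb := fun i => by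
    rw [abs_mul]
    exact mul_le_mul (ha i) (hb i) (abs_nonneg _) ((abs_nonneg _).trans (ha i))
  have hp' := hp.summable.norm
  have hpa := summable_norm_mul_of_abs_le hp0 hp.summable ha
  have hpb := summable_norm_mul_of_abs_le hp0 hp.summable hb
  have hpab := summable_norm_mul_of_abs_le hp0 hp.summable hab
  have h := (((hasSum_prod_mul_of_summable_norm hpab hp').add
    (hasSum_prod_mul_of_summable_norm hp' hpab)).sub
    (hasSum_prod_mul_of_summable_norm hpa hpb)).sub (hasSum_prod_mul_of_summable_norm hpb hpa)
  rw [hp.tsum_eq] at h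
  set S := ∑' i, p i * (a i * b i)
  set Sa := ∑' i, p i * a i
  set Sb := ∑' i, p i * b i
  rw [show 2 * (S - Sa * Sb) = S * 1 + 1 * S - Sa * Sb - Sb * Sa by ring]
  exact h.congr_fun fun z => by ring

theorem hasSum_offDiag_mul [DecidableEq ι] (hp0 : ∀ i, 0 ≤ p i) (hp : HasSum p 1) :
    HasSum (fun z : ι × ι => if z.1 = z.2 then 0 else p z.1 * p z.2) (1 - ∑' i, p i ^ 2) := by
  have hp' := hp.summable.norm
  have hpp : HasSum (fun z : ι × ι => p z.1 * p z.2) 1 := by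
    simpa using hp.mul hp (summable_mul_of_summable_norm hp' hp')
  set diag := fun z : ι × ι => if z.1 = z.2 then p z.1 * p z.2 else 0
  have hpp0 : ∀ z : ι × ι, 0 ≤ p z.1 * p z.2 := fun z => mul_nonneg (hp0 _) (hp0 _)
  have hdiag : Summable diag := hpp.summable.of_nonneg_of_le
    (fun z => by simp only [diag]; split_ifs; exacts [hpp0 z, le_rfl])
    (fun z => by simp only [diag]; split_ifs; exacts [le_rfl, hpp0 z])
  have hsq : HasSum (fun i => p i ^ 2) (∑' z, diag z) := by
    have hinj : Function.Injective fun i : ι => (i, i) := fun i j h => congrArg Prod.fst h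
    have hout : ∀ z ∉ Set.range fun i : ι => (i, i), diag z = 0 :=
      fun z hz => if_neg fun h => hz ⟨z.1, Prod.ext rfl h⟩
    exact ((hinj.hasSum_iff hout).2 hdiag.hasSum).congr_fun fun i => by simp [diag, sq]
  rw [hsq.tsum_eq]
  exact (hpp.sub hdiag.hasSum).congr_fun fun z => by simp only [diag]; split_ifs <;> ring

theorem abs_tsum_mul_sub_tsum_mul_tsum_le (hp0 : ∀ i, 0 ≤ p i) (hp : HasSum p 1)
    {a b : ι → ℝ} {A B : ℝ} (ha : ∀ i j, |a i - a j| ≤ A) (hb : ∀ i j, |b i - b j| ≤ B) :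
    |∑' i, p i * (a i * b i) - (∑' i, p i * a i) * ∑' i, p i * b i| ≤
      1 / 2 * (1 - ∑' i, p i ^ 2) * A * B := by
  classical
  obtain ⟨i₀⟩ : Nonempty ι := by
    by_contra h
    rw [not_nonempty_iff] at h
    exact one_ne_zero (hp.unique hasSum_empty)
  have ha_bdd : ∀ i, |a i| ≤ |a i₀| + A := fun i => by
    linarith [abs_sub_abs_le_abs_sub (a i) (a i₀), ha i i₀]
  have hb_bdd : ∀ i, |b i| ≤ |b i₀| + B := fun i => by
    linarith [abs_sub_abs_le_abs_sub (b i) (b i₀), hb i i₀]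
  have hpairs := hasSum_pairwise_mul_sub_mul_sub hp0 hp ha_bdd hb_bdd
  have hterm : ∀ z : ι × ι, ‖p z.1 * p z.2 * ((a z.1 - a z.2) * (b z.1 - b z.2))‖ ≤
      (if z.1 = z.2 then 0 else p z.1 * p z.2) * (A * B) := by
    intro z
    have hpz := mul_nonneg (hp0 z.1) (hp0 z.2)
    rw [Real.norm_eq_abs, abs_mul, abs_of_nonneg hpz, abs_mul]
    split_ifs with hz
    · simp [hz]
    · exact mul_le_mul_of_nonneg_left (mul_le_mul (ha z.1 z.2) (hb z.1 z.2) (abs_nonneg _)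
        ((abs_nonneg _).trans (ha z.1 z.1))) hpz
  have h := tsum_of_norm_bounded ((hasSum_offDiag_mul hp0 hp).mul_right (A * B)) hterm
  rw [hpairs.tsum_eq, Real.norm_eq_abs, abs_mul, abs_two] at h
  linarith

end ProbabilityWeights

theorem abs_sub_le_sSup_abs_sub {ι : Type*} [LinearOrder ι] [Nontrivial ι] {u : ι → ℝ} {C : ℝ}
    (hu : ∀ k, |u k| ≤ C) (k l : ι) :
    |u k - u l| ≤ sSup {d : ℝ | ∃ k l : ι, k < l ∧ d = |u k - u l|} := by
  have hbdd : BddAbove {d : ℝ | ∃ k l : ι, k < l ∧ d = |u k - u l|} :=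
    ⟨C + C, by rintro _ ⟨k, l, -, rfl⟩; exact (abs_sub _ _).trans (add_le_add (hu k) (hu l))⟩
  have hle : ∀ k l, k < l → |u k - u l| ≤ sSup {d : ℝ | ∃ k l : ι, k < l ∧ d = |u k - u l|} :=
    fun k l hkl => le_csSup hbdd ⟨k, l, hkl, rfl⟩
  rcases lt_trichotomy k l with hkl | rfl | hlk
  · exact hle k l hkl
  · obtain ⟨i, j, hij⟩ := exists_pair_lt ι
    simpa using (abs_nonneg _).trans (hle i j hij)
  · rw [abs_sub_comm]
    exact hle l k hlk

section Szasz

variable {n : ℕ} {x : ℝ}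

noncomputable def szaszBasis (n : ℕ) (x : ℝ) (k : ℕ) : ℝ :=
  exp (-(n * x)) * ((n * x) ^ k / k.factorial)

theorem szaszBasis_nonneg (hx : 0 ≤ x) (k : ℕ) : 0 ≤ szaszBasis n x k := by
  unfold szaszBasis
  positivity

theorem hasSum_szaszBasis (n : ℕ) (x : ℝ) : HasSum (szaszBasis n x) 1 := by
  have h := (NormedSpace.expSeries_div_hasSum_exp (n * x : ℝ)).mul_left (exp (-(n * x)))
  rwa [← exp_eq_exp_ℝ, ← exp_add, neg_add_cancel, exp_zero] at h

theorem szaszOp_eq_tsum (f : ℝ → ℝ) : szaszOp n f x = ∑' k, szaszBasis n x k * f (k / n) := by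
  simp only [szaszOp, szaszBasis, ← tsum_mul_left, mul_assoc]

theorem szaszSigma_eq_tsum : szaszSigma n x = ∑' k, szaszBasis n x k ^ 2 := by
  rw [szaszSigma, ← tsum_mul_left]
  congr 1
  funext k
  rw [szaszBasis, mul_pow (exp _), ← exp_nat_mul, div_pow, ← pow_mul]
  push_cast
  ring_nf

end Szasz

theorem szasz_chebyshev_gruss_general (n : ℕ)
    (f g : ℝ → ℝ)
    (hfb : ∃ C, ∀ y ∈ Set.Ici (0:ℝ), |f y| ≤ C) (hgb : ∃ C, ∀ y ∈ Set.Ici (0:ℝ), |g y| ≤ C)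
    (x : ℝ) (hx : 0 ≤ x) :
    |szaszOp n (fun t => f t * g t) x - szaszOp n f x * szaszOp n g x| ≤
      (1 / 2) * (1 - szaszSigma n x) *
        sSup {d : ℝ | ∃ k l : ℕ, k < l ∧ d = |f (k / n) - f (l / n)|} *
        sSup {d : ℝ | ∃ k l : ℕ, k < l ∧ d = |g (k / n) - g (l / n)|} := by
  have grid_mem (k : ℕ) : (k / n : ℝ) ∈ Set.Ici 0 := Set.mem_Ici.2 (by positivity)
  obtain ⟨Cf, hCf⟩ := hfb
  obtain ⟨Cg, hCg⟩ := hgb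
  rw [szaszOp_eq_tsum, szaszOp_eq_tsum, szaszOp_eq_tsum, szaszSigma_eq_tsum]
  exact abs_tsum_mul_sub_tsum_mul_tsum_le (szaszBasis_nonneg hx) (hasSum_szaszBasis n x)
    (abs_sub_le_sSup_abs_sub fun k => hCf _ (grid_mem k))
    (abs_sub_le_sSup_abs_sub fun k => hCg _ (grid_mem k))

/-- The new Chebyshev-Grüss-type inequality for the Mirakjan–Favard–Szász operator. -/
theorem szasz_chebyshev_gruss (n : ℕ) (hn : 1 ≤ n)
    (f g : ℝ → ℝ)
    (hf : ContinuousOn f (Set.Ici (0:ℝ))) (hg : ContinuousOn g (Set.Ici (0:ℝ)))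
    (hfb : ∃ C, ∀ y ∈ Set.Ici (0:ℝ), |f y| ≤ C) (hgb : ∃ C, ∀ y ∈ Set.Ici (0:ℝ), |g y| ≤ C)
    (x : ℝ) (hx : 0 ≤ x) :
    |szaszOp n (fun t => f t * g t) x - szaszOp n f x * szaszOp n g x| ≤
      (1 / 2) * (1 - szaszSigma n x) *
        sSup {d : ℝ | ∃ k l : ℕ, k < l ∧ d = |f (k / n) - f (l / n)|} *
        sSup {d : ℝ | ∃ k l : ℕ, k < l ∧ d = |g (k / n) - g (l / n)|} :=
  szasz_chebyshev_gruss_general n f g hfb hgb x hx
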